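/- arXiv:1207.1855 — 6 statements merged into one kernel-verified Lean document; each statement's English description precedes it below -/
import Mathlib

section
/- Let x* ∈ ℝⁿ with support N = {j : x*_j ≠ 0}, let T ⊆ {1,...,n}, Tᶜ = {1,...,n}\T, and Δ = N\T. Let δ ∈ ℝⁿ and I ⊆ Δ be such that δ_k x*_k > 0 for all k ∈ I and δ_k x*_k ≤ 0 for all k ∈ Δ\I. Then for all t < 0 with |t| sufficiently small, ‖(x* + tδ)_{Tᶜ}‖₁ = ‖x*_{Tᶜ}‖₁ + |t|·(∑_{k ∈ Tᶜ\I} |δ_k| − ∑_{k ∈ I} |δ_k|), where v_{Tᶜ} denotes the restriction of v to indices in Tᶜ. -/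
/-!
Coordinatewise, `|x + t δ| = |x| ± |t| |δ|`: the perturbation `t δ` points the same way as `x`
(or `x = 0`) off `I`, and the opposite way on `I`, where it is too small to flip the sign of `x`.
Summing over `Tᶜ = (Tᶜ \ I) ∪ I` gives the formula.
-/

open Finset

section LinearOrderedCommRing

variable {α : Type*} [CommRing α] [LinearOrder α] [IsStrictOrderedRing α] {a b : α}

theorem abs_add_of_mul_nonneg (h : 0 ≤ a * b) : |a + b| = |a| + |b| :=
  (abs_add_eq_add_abs_iff a b).2 (mul_nonneg_iff.1 h)

theorem abs_add_of_mul_nonpos_of_abs_le (h : a * b ≤ 0) (hba : |b| ≤ |a|) :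
    |a + b| = |a| - |b| := by
  -- `a = (a + b) + (-b)` with both summands of the same sign.
  have hsame : 0 ≤ (a + b) * -b := by
    have hab : |a| * |b| = -(a * b) := by rw [← abs_mul, abs_of_nonpos h]
    have hbb : |b| * |b| = b * b := abs_mul_abs_self b
    nlinarith [mul_le_mul_of_nonneg_right hba (abs_nonneg b)]
  have := abs_add_of_mul_nonneg hsame
  rw [add_neg_cancel_right, abs_neg] at this
  linarith

end LinearOrderedCommRing

/-- ℓ¹-norm expansion on Tᶜ for x* + tδ, t < 0 with |t| sufficiently small. -/
theorem stmt_1 {n : ℕ} (xstar δ : Fin n → ℝ) (T I : Finset (Fin n))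
    (hI : ∀ k ∈ I, xstar k ≠ 0 ∧ k ∉ T)
    (hpos : ∀ k ∈ I, δ k * xstar k > 0)
    (hneg : ∀ k, xstar k ≠ 0 → k ∉ T → k ∉ I → δ k * xstar k ≤ 0)
    (t : ℝ) (ht : t < 0)
    (hsmall : ∀ k, xstar k ≠ 0 → δ k ≠ 0 → |t| < |xstar k| / |δ k|) :
    ∑ k ∈ Tᶜ, |xstar k + t * δ k|
      = ∑ k ∈ Tᶜ, |xstar k| + |t| * (∑ k ∈ Tᶜ \ I, |δ k| - ∑ k ∈ I, |δ k|) := by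
  have hIT : I ⊆ Tᶜ := fun k hk => mem_compl.2 (hI k hk).2
  have off_I : ∀ k ∈ Tᶜ \ I, |xstar k + t * δ k| = |xstar k| + |t| * |δ k| := by
    intro k hk
    obtain ⟨hkT, hkI⟩ := mem_sdiff.1 hk
    have hsame : 0 ≤ xstar k * (t * δ k) := by
      rcases eq_or_ne (xstar k) 0 with hx | hx
      · simp [hx]
      · nlinarith [hneg k hx (mem_compl.1 hkT) hkI]
    rw [abs_add_of_mul_nonneg hsame, abs_mul]
  have on_I : ∀ k ∈ I, |xstar k + t * δ k| = |xstar k| - |t| * |δ k| := by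
    intro k hk
    have hx := (hI k hk).1
    have hδx := hpos k hk
    have hδ : δ k ≠ 0 := left_ne_zero_of_mul hδx.ne'
    have hsmall' : |t| * |δ k| < |xstar k| :=
      (lt_div_iff₀ (abs_pos.2 hδ)).1 (hsmall k hx hδ)
    rw [abs_add_of_mul_nonpos_of_abs_le (by nlinarith) (by rw [abs_mul]; exact hsmall'.le),
      abs_mul]
  rw [← sum_sdiff hIT, ← sum_sdiff (f := fun k => |xstar k|) hIT, sum_congr rfl off_I,
    sum_congr rfl on_I, sum_add_distrib, sum_sub_distrib, ← mul_sum, ← mul_sum]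
  ring
end

section
/- Let x* ∈ ℝⁿ with support N, T ⊆ {1,...,n}, Δ = N\T, and let x† ∈ ℝⁿ be arbitrary. Define δ = (x* − x†)/‖x* − x†‖₁ (assuming x† ≠ x*), t* = −‖x* − x†‖₁, and I = {k ∈ Δ : sign(x*_k) = sign(δ_k)}. Then ‖x†_{Tᶜ}‖₁ ≥ ‖x*_{Tᶜ}‖₁ + |t*|·(∑_{k ∈ Tᶜ\I} |δ_k| − ∑_{k ∈ I} |δ_k|). -/
/-!
Coordinatewise, `|t*| |δ_k| = |x*_k - x†_k|`. On `Tᶜ \ I` the numbers `x*_k` and `x*_k - x†_k`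
do not have the same strict sign, so `x†_k = x*_k - (x*_k - x†_k)` has absolute value
`|x*_k| + |x*_k - x†_k|`; on `I` the reverse triangle inequality still gives
`|x†_k| ≥ |x*_k| - |x*_k - x†_k|`. Summing over `Tᶜ = (Tᶜ \ I) ∪ I` gives the bound.
-/

open Finset

theorem Real.sign_div_of_pos (x : ℝ) {S : ℝ} (hS : 0 < S) : Real.sign (x / S) = Real.sign x := by
  rcases lt_trichotomy x 0 with h | rfl | h
  · rw [Real.sign_of_neg h, Real.sign_of_neg (div_neg_of_neg_of_pos h hS)]
  · simp
  · rw [Real.sign_of_pos h, Real.sign_of_pos (div_pos h hS)]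

theorem Real.mul_nonpos_of_sign_ne {a b : ℝ} (h : Real.sign a ≠ Real.sign b) : a * b ≤ 0 := by
  by_contra! hab
  rcases pos_and_pos_or_neg_and_neg_of_mul_pos hab with ⟨ha, hb⟩ | ⟨ha, hb⟩
  · exact h (by rw [Real.sign_of_pos ha, Real.sign_of_pos hb])
  · exact h (by rw [Real.sign_of_neg ha, Real.sign_of_neg hb])

theorem abs_add_abs_sub_le_abs_of_mul_nonpos {a b : ℝ} (h : a * (a - b) ≤ 0) :
    |a| + |a - b| ≤ |b| := by
  rcases abs_cases a with ⟨ha, _⟩ | ⟨ha, _⟩ <;>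
    rcases abs_cases (a - b) with ⟨hab, _⟩ | ⟨hab, _⟩ <;>
    rcases abs_cases b with ⟨hb, _⟩ | ⟨hb, _⟩ <;>
    nlinarith

theorem sum_abs_add_sum_abs_sub_le_sum_abs {ι : Type*} [DecidableEq ι] {s I : Finset ι} (hIs : I ⊆ s)
    {x y : ι → ℝ} (hout : ∀ k ∈ s \ I, x k * (x k - y k) ≤ 0) :
    ∑ k ∈ s, |x k| + (∑ k ∈ s \ I, |x k - y k| - ∑ k ∈ I, |x k - y k|) ≤ ∑ k ∈ s, |y k| := by
  have h_out : ∑ k ∈ s \ I, (|x k| + |x k - y k|) ≤ ∑ k ∈ s \ I, |y k| :=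
    sum_le_sum fun k hk => abs_add_abs_sub_le_abs_of_mul_nonpos (hout k hk)
  have h_in : ∑ k ∈ I, (|x k| - |x k - y k|) ≤ ∑ k ∈ I, |y k| :=
    sum_le_sum fun k _ => by linarith [abs_sub_abs_le_abs_sub (x k) (y k), abs_sub_comm (x k) (y k)]
  rw [← sum_sdiff hIs (f := fun k => |x k|), ← sum_sdiff hIs (f := fun k => |y k|)]
  rw [sum_add_distrib] at h_out
  rw [sum_sub_distrib] at h_in
  linarith

/-- lower bound on ‖x†_{Tᶜ}‖₁ in terms of the normalized direction δ. -/
theorem stmt_2 {n : ℕ} (xstar xdag : Fin n → ℝ) (hne : xdag ≠ xstar)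
    (T I : Finset (Fin n)) (δ : Fin n → ℝ)
    (hδ : δ = fun k => (xstar k - xdag k) / (∑ j, |xstar j - xdag j|))
    (tstar : ℝ) (htstar : tstar = -(∑ j, |xstar j - xdag j|))
    (hI : ∀ k, k ∈ I ↔ (xstar k ≠ 0 ∧ k ∉ T ∧ Real.sign (xstar k) = Real.sign (δ k))) :
    ∑ k ∈ Tᶜ, |xdag k|
      ≥ ∑ k ∈ Tᶜ, |xstar k| + |tstar| * (∑ k ∈ Tᶜ \ I, |δ k| - ∑ k ∈ I, |δ k|) := by
  set S := ∑ j, |xstar j - xdag j|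
  have hS : 0 < S := by
    obtain ⟨j, hj⟩ := Function.ne_iff.mp hne
    exact sum_pos' (fun _ _ => abs_nonneg _) ⟨j, mem_univ j, abs_pos.mpr (sub_ne_zero.mpr hj.symm)⟩
  have hscale k : |tstar| * |δ k| = |xstar k - xdag k| := by
    rw [htstar, hδ, abs_neg, abs_of_pos hS, abs_div, abs_of_pos hS, mul_div_cancel₀ _ hS.ne']
  have hout : ∀ k ∈ Tᶜ \ I, xstar k * (xstar k - xdag k) ≤ 0 := by
    intro k hk
    obtain ⟨hkT, hkI⟩ := mem_sdiff.mp hk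
    by_cases hk0 : xstar k = 0
    · simp [hk0]
    refine Real.mul_nonpos_of_sign_ne fun hsign => hkI ((hI k).mpr ⟨hk0, mem_compl.mp hkT, ?_⟩)
    rw [hδ, Real.sign_div_of_pos _ hS, hsign]
  have hIT : I ⊆ Tᶜ := fun k hk => mem_compl.mpr ((hI k).mp hk).2.1
  rw [mul_sub, mul_sum, mul_sum]
  simp only [hscale]
  exact sum_abs_add_sum_abs_sub_le_sum_abs hIT hout
end

section
/- Let A ∈ ℝ^{m×n}, x* ∈ ℝⁿ with support N, T ⊆ {1,...,n}, Δ = N\T, and y = A x*. Suppose x* is the unique minimizer of ‖x_{Tᶜ}‖₁ subject to Ax = y. Then for every subset I ⊆ Δ and every δ ∈ ℝⁿ satisfying Aδ = 0, ‖δ‖₁ = 1, δ_k x*_k > 0 for k ∈ I, and δ_k x*_k ≤ 0 for k ∈ Δ\I, one has ∑_{k ∈ Tᶜ\I} |δ_k| − ∑_{k ∈ I} |δ_k| > 0. -/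
/-!
Perturb `x*` along the null-space direction `δ`: for small `ε > 0` the point `x* - ε δ` is still
feasible, and on each coordinate of `Tᶜ` its absolute value moves by exactly `ε |δ k|`, down on
`I` (where `δ` has the sign of `x*` and `ε` is too small to cross zero) and up on `Tᶜ \ I` (where
`δ` has the opposite sign or `x*` vanishes). Hence the objective changes by
`ε (∑_{Tᶜ \ I} |δ k| - ∑_I |δ k|)`, which must be positive by uniqueness of the minimizer.
-/

open Finset

lemma abs_sub_mul_of_mul_pos {a d ε : ℝ} (h : 0 < d * a) (hle : ε * |d| ≤ |a|) :
    |a - ε * d| = |a| - ε * |d| := by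
  rcases lt_trichotomy a 0 with ha | rfl | ha
  · have hd : d < 0 := by nlinarith
    rw [abs_of_neg ha, abs_of_neg hd] at hle ⊢
    rw [abs_of_nonpos (by nlinarith)]
    ring
  · simp at h
  · have hd : 0 < d := by nlinarith
    rw [abs_of_pos ha, abs_of_pos hd] at hle ⊢
    rw [abs_of_nonneg (by nlinarith)]

lemma abs_sub_mul_of_mul_nonpos {a d ε : ℝ} (hε : 0 < ε) (h : d * a ≤ 0) :
    |a - ε * d| = |a| + ε * |d| := by
  rcases lt_trichotomy a 0 with ha | rfl | ha
  · have hd : 0 ≤ d := by nlinarith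
    rw [abs_of_neg ha, abs_of_nonneg hd, abs_of_nonpos (by nlinarith)]
    ring
  · rw [abs_zero, zero_sub, abs_neg, abs_mul, abs_of_pos hε, zero_add]
  · have hd : d ≤ 0 := by nlinarith
    rw [abs_of_pos ha, abs_of_nonpos hd, abs_of_nonneg (by nlinarith)]
    ring

lemma exists_pos_forall_le_abs {ι : Type*} (I : Finset ι) (x : ι → ℝ)
    (hx : ∀ k ∈ I, x k ≠ 0) : ∃ ε : ℝ, 0 < ε ∧ ∀ k ∈ I, ε ≤ |x k| := by
  rcases I.eq_empty_or_nonempty with rfl | hI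
  · exact ⟨1, one_pos, by simp⟩
  · exact ⟨I.inf' hI (|x ·|), (lt_inf'_iff hI).2 fun k hk ↦ abs_pos.2 (hx k hk),
      fun k hk ↦ inf'_le _ hk⟩

lemma sum_abs_sub_mul_eq {ι : Type*} [DecidableEq ι] {s I : Finset ι} (hIs : I ⊆ s)
    {x δ : ι → ℝ} {ε : ℝ} (hε : 0 < ε)
    (hpos : ∀ k ∈ I, 0 < δ k * x k) (hsmall : ∀ k ∈ I, ε * |δ k| ≤ |x k|)
    (hneg : ∀ k ∈ s \ I, δ k * x k ≤ 0) :
    ∑ k ∈ s, |x k - ε * δ k| =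
      ∑ k ∈ s, |x k| + ε * (∑ k ∈ s \ I, |δ k| - ∑ k ∈ I, |δ k|) := by
  have hI : ∑ k ∈ I, |x k - ε * δ k| = ∑ k ∈ I, (|x k| - ε * |δ k|) :=
    sum_congr rfl fun k hk ↦ abs_sub_mul_of_mul_pos (hpos k hk) (hsmall k hk)
  have hsI : ∑ k ∈ s \ I, |x k - ε * δ k| = ∑ k ∈ s \ I, (|x k| + ε * |δ k|) :=
    sum_congr rfl fun k hk ↦ abs_sub_mul_of_mul_nonpos hε (hneg k hk)
  rw [← sum_sdiff hIs, ← sum_sdiff hIs (f := (|x ·|)), hI, hsI, sum_add_distrib,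
    sum_sub_distrib, ← mul_sum, ← mul_sum]
  ring

lemma abs_le_one_of_sum_abs_eq_one {ι : Type*} [Fintype ι] {δ : ι → ℝ}
    (h : ∑ k, |δ k| = 1) (k : ι) : |δ k| ≤ 1 :=
  h ▸ single_le_sum (f := (|δ ·|)) (fun _ _ ↦ abs_nonneg _) (mem_univ k)

/-- necessity direction of Theorem 1. -/
theorem stmt_3 {m n : ℕ} (A : Matrix (Fin m) (Fin n) ℝ) (xstar : Fin n → ℝ)
    (T : Finset (Fin n))
    (hmin : ∀ x : Fin n → ℝ, A.mulVec x = A.mulVec xstar → x ≠ xstar →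
      ∑ k ∈ Tᶜ, |xstar k| < ∑ k ∈ Tᶜ, |x k|)
    (I : Finset (Fin n)) (hIsub : ∀ k ∈ I, xstar k ≠ 0 ∧ k ∉ T)
    (δ : Fin n → ℝ) (hδ0 : A.mulVec δ = 0) (hnorm : ∑ k, |δ k| = 1)
    (hpos : ∀ k ∈ I, δ k * xstar k > 0)
    (hneg : ∀ k, xstar k ≠ 0 → k ∉ T → k ∉ I → δ k * xstar k ≤ 0) :
    ∑ k ∈ Tᶜ \ I, |δ k| - ∑ k ∈ I, |δ k| > 0 := by
  obtain ⟨ε, hε, hεI⟩ := exists_pos_forall_le_abs I xstar fun k hk ↦ (hIsub k hk).1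
  have hδ : δ ≠ 0 := by
    rintro rfl
    simp at hnorm
  have hfeas : A.mulVec (xstar - ε • δ) = A.mulVec xstar := by
    rw [Matrix.mulVec_sub, Matrix.mulVec_smul, hδ0, smul_zero, sub_zero]
  have hne : xstar - ε • δ ≠ xstar := by
    simpa [sub_eq_self, hε.ne'] using hδ
  have hcost := sum_abs_sub_mul_eq (s := Tᶜ) (fun k hk ↦ mem_compl.2 (hIsub k hk).2) hε hpos
    (fun k hk ↦ (mul_le_of_le_one_right hε.le (abs_le_one_of_sum_abs_eq_one hnorm k)).trans
      (hεI k hk))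
    (fun k hk ↦ by
      rw [mem_sdiff, mem_compl] at hk
      by_cases h0 : xstar k = 0
      · simp [h0]
      · exact hneg k h0 hk.1 hk.2)
  have hlt := hmin _ hfeas hne
  simp only [Pi.sub_apply, Pi.smul_apply, smul_eq_mul, hcost] at hlt
  exact pos_of_mul_pos_right (by linarith) hε.le
end

section
/- Let A ∈ ℝ^{m×n}, x* ∈ ℝⁿ with support N, T ⊆ {1,...,n}, Δ = N\T, and y = A x*. Suppose that for every subset I ⊆ Δ and every δ ∈ ℝⁿ with Aδ = 0, ‖δ‖₁ = 1, δ_k x*_k > 0 for k ∈ I, and δ_k x*_k ≤ 0 for k ∈ Δ\I, one has ∑_{k ∈ Tᶜ\I} |δ_k| − ∑_{k ∈ I} |δ_k| > 0. Then x* is the unique minimizer of ‖x_{Tᶜ}‖₁ subject to Ax = y; i.e., for every x† ≠ x* with A x† = y, ‖x†_{Tᶜ}‖₁ > ‖x*_{Tᶜ}‖₁. -/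
/-!
Put `d = x* - x†`, a nonzero vector of `ker A`. On coordinates of `Tᶜ` where `d` and `x*` do not
share a strict sign, `|x†_k| = |x*_k| + |d_k|`; on the set `I` where they do, at least
`|x†_k| ≥ |x*_k| - |d_k|`. Hence `‖x†_{Tᶜ}‖₁ ≥ ‖x*_{Tᶜ}‖₁ + ∑_{Tᶜ \ I} |d_k| - ∑_I |d_k|`, and the
last difference is positive by the hypothesis applied to `δ = d / ‖d‖₁`.
-/

open Finset Matrix

/-- `I` ranges over the subsets of `Δ = supp x \ T`. -/
def SignedNullSpaceProperty {ι κ : Type*} [Fintype ι] [DecidableEq ι]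
    (A : Matrix κ ι ℝ) (x : ι → ℝ) (T : Finset ι) : Prop :=
  ∀ I : Finset ι, (∀ k ∈ I, x k ≠ 0 ∧ k ∉ T) →
    ∀ δ : ι → ℝ, A *ᵥ δ = 0 → ∑ k, |δ k| = 1 →
      (∀ k ∈ I, δ k * x k > 0) →
      (∀ k, x k ≠ 0 → k ∉ T → k ∉ I → δ k * x k ≤ 0) →
      ∑ k ∈ Tᶜ \ I, |δ k| - ∑ k ∈ I, |δ k| > 0

theorem abs_sub_eq_abs_add_abs_of_mul_nonpos {α : Type*} [Ring α] [LinearOrder α]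
    [IsStrictOrderedRing α] {a b : α} (h : b * a ≤ 0) : |a - b| = |a| + |b| := by
  rw [sub_eq_add_neg, ← abs_neg b, abs_add_eq_add_abs_iff]
  rcases mul_nonpos_iff.mp h with ⟨hb, ha⟩ | ⟨hb, ha⟩
  · exact Or.inr ⟨ha, neg_nonpos.mpr hb⟩
  · exact Or.inl ⟨ha, neg_nonneg.mpr hb⟩

theorem sum_abs_smul {ι : Type*} (S : Finset ι) (c : ℝ) (d : ι → ℝ) :
    ∑ k ∈ S, |(c • d) k| = |c| * ∑ k ∈ S, |d k| := by
  simp only [Pi.smul_apply, smul_eq_mul, abs_mul, mul_sum]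

section

variable {ι : Type*} [DecidableEq ι]

theorem sum_abs_add_sum_abs_sdiff_sub_le {S : Finset ι} (x d : ι → ℝ) :
    ∑ k ∈ S, |x k| + (∑ k ∈ S \ S.filter (fun k => 0 < d k * x k), |d k|
      - ∑ k ∈ S.filter (fun k => 0 < d k * x k), |d k|) ≤ ∑ k ∈ S, |x k - d k| := by
  set I := S.filter (fun k => 0 < d k * x k)
  have hIS : I ⊆ S := filter_subset _ _
  have outside : ∑ k ∈ S \ I, (|x k| + |d k|) = ∑ k ∈ S \ I, |x k - d k| := by
    refine sum_congr rfl fun k hk => (abs_sub_eq_abs_add_abs_of_mul_nonpos ?_).symm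
    simp only [I, mem_sdiff, mem_filter, not_and, not_lt] at hk
    exact hk.2 hk.1
  have inside : ∑ k ∈ I, (|x k| - |d k|) ≤ ∑ k ∈ I, |x k - d k| :=
    sum_le_sum fun k _ => abs_sub_abs_le_abs_sub _ _
  rw [← sum_sdiff hIS, ← sum_sdiff hIS (f := fun k => |x k - d k|)]
  rw [sum_add_distrib] at outside
  rw [sum_sub_distrib] at inside
  linarith

variable [Fintype ι] {κ : Type*}

theorem SignedNullSpaceProperty.sum_abs_lt {A : Matrix κ ι ℝ} {x : ι → ℝ} {T : Finset ι}
    (h : SignedNullSpaceProperty A x T) {d : ι → ℝ} (hd : A *ᵥ d = 0) (hd0 : d ≠ 0) :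
    ∑ k ∈ Tᶜ.filter (fun k => 0 < d k * x k), |d k|
      < ∑ k ∈ Tᶜ \ Tᶜ.filter (fun k => 0 < d k * x k), |d k| := by
  set I := Tᶜ.filter (fun k => 0 < d k * x k)
  set s := ∑ k, |d k|
  have hs : 0 < s := by
    refine lt_of_le_of_ne (sum_nonneg fun k _ => abs_nonneg _) (Ne.symm fun hs0 => hd0 ?_)
    funext k
    simpa using (sum_eq_zero_iff_of_nonneg fun k _ => abs_nonneg (d k)).mp hs0 k (mem_univ k)
  have hsign (k : ι) : (s⁻¹ • d) k * x k = s⁻¹ * (d k * x k) := by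
    rw [Pi.smul_apply, smul_eq_mul, mul_assoc]
  have hI : ∀ k ∈ I, x k ≠ 0 ∧ k ∉ T := fun k hk => by
    rw [mem_filter, mem_compl] at hk
    exact ⟨right_ne_zero_of_mul hk.2.ne', hk.1⟩
  have key := h I hI (s⁻¹ • d) (by rw [mulVec_smul, hd, smul_zero])
    (by rw [sum_abs_smul, abs_of_pos (inv_pos.mpr hs), inv_mul_cancel₀ hs.ne'])
    (fun k hk => by rw [hsign]; exact mul_pos (inv_pos.mpr hs) (mem_filter.mp hk).2)
    (fun k _ hkT hkI => by
      rw [hsign]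
      refine mul_nonpos_of_nonneg_of_nonpos (inv_nonneg.mpr hs.le) (not_lt.mp fun hpos => hkI ?_)
      exact mem_filter.mpr ⟨mem_compl.mpr hkT, hpos⟩)
  rw [sum_abs_smul, sum_abs_smul, ← mul_sub] at key
  exact sub_pos.mp (pos_of_mul_pos_right key (abs_nonneg _))

end

/-- sufficiency direction of Theorem 1. -/
theorem stmt_4 {m n : ℕ} (A : Matrix (Fin m) (Fin n) ℝ) (xstar : Fin n → ℝ)
    (T : Finset (Fin n))
    (hcond : ∀ (I : Finset (Fin n)), (∀ k ∈ I, xstar k ≠ 0 ∧ k ∉ T) →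
      ∀ δ : Fin n → ℝ, A.mulVec δ = 0 → (∑ k, |δ k|) = 1 →
        (∀ k ∈ I, δ k * xstar k > 0) →
        (∀ k, xstar k ≠ 0 → k ∉ T → k ∉ I → δ k * xstar k ≤ 0) →
        ∑ k ∈ Tᶜ \ I, |δ k| - ∑ k ∈ I, |δ k| > 0) :
    ∀ xdag : Fin n → ℝ, A.mulVec xdag = A.mulVec xstar → xdag ≠ xstar →
      ∑ k ∈ Tᶜ, |xstar k| < ∑ k ∈ Tᶜ, |xdag k| := by
  intro xdag hax hne
  set d := xstar - xdag
  have hd : A *ᵥ d = 0 := by rw [mulVec_sub, hax, sub_self]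
  have key := SignedNullSpaceProperty.sum_abs_lt hcond hd (sub_ne_zero.mpr hne.symm)
  calc ∑ k ∈ Tᶜ, |xstar k|
      < ∑ k ∈ Tᶜ, |xstar k| + (∑ k ∈ Tᶜ \ Tᶜ.filter (fun k => 0 < d k * xstar k), |d k|
          - ∑ k ∈ Tᶜ.filter (fun k => 0 < d k * xstar k), |d k|) := by linarith
    _ ≤ ∑ k ∈ Tᶜ, |xstar k - d k| := sum_abs_add_sum_abs_sdiff_sub_le xstar d
    _ = ∑ k ∈ Tᶜ, |xdag k| := by simp only [d, Pi.sub_apply, sub_sub_cancel]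
end

section
/- Let A ∈ ℝ^{m×n}, T ⊆ {1,...,n}, and let x*, z* ∈ ℝⁿ be two vectors with supp(x*) = supp(z*) and sign(x*_k) = sign(z*_k) for all k ∈ Tᶜ. If x* is the unique minimizer of ‖x_{Tᶜ}‖₁ subject to Ax = A x*, then z* is the unique minimizer of ‖x_{Tᶜ}‖₁ subject to Ax = A z*. -/
/-!
Let `y ≠ z*` have the same image as `z*` with `‖y_{Tᶜ}‖₁ ≤ ‖z*_{Tᶜ}‖₁`, and step from `x*` by
`ε (y - z*)`. For small `ε > 0` the step does not change the signs of the nonzero entries of `x*` on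
`Tᶜ`, and these are the signs of `z*`; so on each coordinate of `Tᶜ` the cost `|·|` grows by at most
`ε` times its growth from `z*` to `y` (with equality where `x*` and `z*` vanish, and by convexity of
`|·|` elsewhere). Thus `x* + ε (y - z*)` is another point of the fibre of `x*` whose cost on `Tᶜ` is
at most that of `x*`, contradicting uniqueness.
-/

open Filter Topology

lemma Real.sign_eq_sign_cases {a b : ℝ} (h : Real.sign a = Real.sign b) :
    (a < 0 ∧ b < 0) ∨ (a = 0 ∧ b = 0) ∨ (0 < a ∧ 0 < b) := by
  rcases lt_trichotomy a 0 with ha | rfl | ha <;> rcases lt_trichotomy b 0 with hb | rfl | hb <;>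
    simp_all [Real.sign_of_neg, Real.sign_of_pos] <;> norm_num at h

lemma abs_add_mul_sub_sub_abs_le_of_sign_eq {a b y ε : ℝ} (hab : Real.sign a = Real.sign b)
    (hε : 0 ≤ ε) (hsmall : a ≠ 0 → ε * |y - b| ≤ |a|) :
    |a + ε * (y - b)| - |a| ≤ ε * (|y| - |b|) := by
  have hle := mul_le_mul_of_nonneg_left (le_abs_self (y - b)) hε
  have hge := mul_le_mul_of_nonneg_left (neg_abs_le (y - b)) hε
  rcases Real.sign_eq_sign_cases hab with ⟨ha, hb⟩ | ⟨rfl, rfl⟩ | ⟨ha, hb⟩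
  · have hsmall := hsmall ha.ne
    rw [abs_of_neg ha] at hsmall
    rw [abs_of_nonpos (by linarith), abs_of_neg ha, abs_of_neg hb]
    linarith [mul_le_mul_of_nonneg_left (neg_le_abs y) hε]
  · simp [abs_mul, abs_of_nonneg hε]
  · have hsmall := hsmall ha.ne'
    rw [abs_of_pos ha] at hsmall
    rw [abs_of_nonneg (by linarith), abs_of_pos ha, abs_of_pos hb]
    linarith [mul_le_mul_of_nonneg_left (le_abs_self y) hε]

lemma exists_pos_forall_mem_mul_abs_le {ι : Type*} (S : Finset ι) (a d : ι → ℝ) :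
    ∃ ε > 0, ∀ k ∈ S, a k ≠ 0 → ε * |d k| ≤ |a k| := by
  have hsmall : ∀ᶠ ε in 𝓝[>] (0 : ℝ), ∀ k ∈ S, a k ≠ 0 → ε * |d k| ≤ |a k| := by
    refine (eventually_all_finset S).2 fun k _ => Eventually.filter_mono nhdsWithin_le_nhds ?_
    by_cases hk : a k = 0
    · simp [hk]
    · have hlim : Tendsto (fun ε : ℝ => ε * |d k|) (𝓝 0) (𝓝 0) := by
        simpa using (tendsto_id (x := 𝓝 (0 : ℝ))).mul_const |d k|
      filter_upwards [hlim.eventually_le_const (abs_pos.2 hk)] with ε hε _ using hε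
  exact (eventually_mem_nhdsWithin.and hsmall).exists

def IsUniqueL1MinOnFiber {ι M : Type*} [AddCommGroup M] [Module ℝ M] (f : (ι → ℝ) →ₗ[ℝ] M)
    (S : Finset ι) (x : ι → ℝ) : Prop :=
  ∀ y, f y = f x → y ≠ x → ∑ k ∈ S, |x k| < ∑ k ∈ S, |y k|

theorem IsUniqueL1MinOnFiber.of_sign_eq {ι M : Type*} [AddCommGroup M] [Module ℝ M]
    {f : (ι → ℝ) →ₗ[ℝ] M} {S : Finset ι} {x z : ι → ℝ}
    (hsign : ∀ k ∈ S, Real.sign (x k) = Real.sign (z k)) (hx : IsUniqueL1MinOnFiber f S x) :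
    IsUniqueL1MinOnFiber f S z := by
  intro y hy hyz
  by_contra! hcost
  obtain ⟨ε, hε, hsmall⟩ := exists_pos_forall_mem_mul_abs_le S x (y - z)
  set x' := x + ε • (y - z)
  have hfx' : f x' = f x := by simp [x', hy]
  have hx'x : x' ≠ x := by simpa [x', hε.ne', sub_eq_zero] using hyz
  have hdescent : ∑ k ∈ S, |x' k| - ∑ k ∈ S, |x k| ≤ ε * (∑ k ∈ S, |y k| - ∑ k ∈ S, |z k|) := by
    rw [← Finset.sum_sub_distrib, ← Finset.sum_sub_distrib, Finset.mul_sum]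
    exact Finset.sum_le_sum fun k hk =>
      abs_add_mul_sub_sub_abs_le_of_sign_eq (hsign k hk) hε.le (hsmall k hk)
  linarith [hx x' hfx' hx'x, mul_nonpos_of_nonneg_of_nonpos hε.le (sub_nonpos.2 hcost)]

theorem stmt_7_general {m n : ℕ} (A : Matrix (Fin m) (Fin n) ℝ) (T : Finset (Fin n))
    (xstar zstar : Fin n → ℝ)
    (hsign : ∀ k ∈ Tᶜ, Real.sign (xstar k) = Real.sign (zstar k))
    (hmin : ∀ x : Fin n → ℝ, A.mulVec x = A.mulVec xstar → x ≠ xstar →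
      ∑ k ∈ Tᶜ, |xstar k| < ∑ k ∈ Tᶜ, |x k|) :
    ∀ x : Fin n → ℝ, A.mulVec x = A.mulVec zstar → x ≠ zstar →
      ∑ k ∈ Tᶜ, |zstar k| < ∑ k ∈ Tᶜ, |x k| :=
  IsUniqueL1MinOnFiber.of_sign_eq (f := A.mulVecLin) hsign hmin

/-- Remark 1: recoverability depends only on the support and the sign
pattern on Tᶜ. -/
theorem stmt_7 {m n : ℕ} (A : Matrix (Fin m) (Fin n) ℝ) (T : Finset (Fin n))
    (xstar zstar : Fin n → ℝ)
    (hsupp : ∀ k, xstar k = 0 ↔ zstar k = 0)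
    (hsign : ∀ k ∈ Tᶜ, Real.sign (xstar k) = Real.sign (zstar k))
    (hmin : ∀ x : Fin n → ℝ, A.mulVec x = A.mulVec xstar → x ≠ xstar →
      ∑ k ∈ Tᶜ, |xstar k| < ∑ k ∈ Tᶜ, |x k|) :
    ∀ x : Fin n → ℝ, A.mulVec x = A.mulVec zstar → x ≠ zstar →
      ∑ k ∈ Tᶜ, |zstar k| < ∑ k ∈ Tᶜ, |x k| :=
  stmt_7_general A T xstar zstar hsign hmin
end

section
/- Let A ∈ ℝ^{m×n} and x* ∈ ℝⁿ with support N. If x* is the unique minimizer of ‖x_{Tᶜ}‖₁ subject to Ax = A x* for T = ∅ (i.e., x* is exactly recovered by basis pursuit min ‖x‖₁ s.t. Ax = A x*), then for every δ ≠ 0 in the null space of A, ∑_{k ∉ N} |δ_k| + ∑_{k ∈ N : δ_k x*_k ≤ 0} |δ_k| > ∑_{k ∈ N : δ_k x*_k > 0} |δ_k|. -/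
/-!
Perturb `x*` along the null-space direction `δ`: `x* - t • δ` is feasible for every `t`, and
once `t > 0` is so small that no nonzero coordinate of `x*` changes sign, its `ℓ¹` norm is exactly
`‖x*‖₁ + t (∑_{δₖx*ₖ ≤ 0} |δₖ| - ∑_{δₖx*ₖ > 0} |δₖ|)`. Strict minimality of `x*` forces the
bracket to be positive.
-/

open Finset Filter Topology

lemma abs_sub_mul_eq_of_mul_abs_le {a d t : ℝ} (ht : 0 ≤ t) (hsmall : a ≠ 0 → t * |d| ≤ |a|) :
    |a - t * d| = |a| + t * (if 0 < d * a then -|d| else |d|) := by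
  rcases lt_trichotomy a 0 with ha | rfl | ha
  · have h := hsmall ha.ne
    rw [abs_of_neg ha] at h ⊢
    split_ifs with hda
    · have hd : d < 0 := by nlinarith
      rw [abs_of_neg hd] at h ⊢
      rw [abs_of_nonpos (by nlinarith)]
      ring
    · have hd : 0 ≤ d := by nlinarith
      rw [abs_of_nonneg hd, abs_of_neg (by nlinarith)]
      ring
  · simp [abs_mul, abs_of_nonneg ht]
  · have h := hsmall ha.ne'
    rw [abs_of_pos ha] at h ⊢
    split_ifs with hda
    · have hd : 0 < d := by nlinarith
      rw [abs_of_pos hd] at h ⊢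
      rw [abs_of_nonneg (by nlinarith)]
      ring
    · have hd : d ≤ 0 := by nlinarith
      rw [abs_of_nonpos hd, abs_of_pos (by nlinarith)]
      ring

section
variable {ι : Type*} [Fintype ι]

lemma exists_pos_mul_abs_le (x δ : ι → ℝ) : ∃ t > 0, ∀ k, x k ≠ 0 → t * |δ k| ≤ |x k| := by
  have hsmall : ∀ᶠ t in 𝓝[>] (0 : ℝ), ∀ k, x k ≠ 0 → t * |δ k| ≤ |x k| := by
    refine eventually_all.2 fun k => ?_
    by_cases hk : x k = 0
    · exact .of_forall fun _ h => absurd hk h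
    have hlim : Tendsto (fun t : ℝ => t * |δ k|) (𝓝[>] 0) (𝓝 0) :=
      ((continuous_id.mul continuous_const).tendsto' 0 0 (zero_mul _)).mono_left
        nhdsWithin_le_nhds
    filter_upwards [hlim.eventually (ge_mem_nhds (abs_pos.2 hk))] with t ht _ using ht
  exact (hsmall.and self_mem_nhdsWithin).exists.imp fun t ht => ⟨ht.2, ht.1⟩

lemma sum_abs_sub_smul_eq (x δ : ι → ℝ) {t : ℝ} (ht : 0 ≤ t)
    (hsmall : ∀ k, x k ≠ 0 → t * |δ k| ≤ |x k|) :
    ∑ k, |(x - t • δ) k| = ∑ k, |x k| + t * (∑ k ∈ univ.filter (fun k => ¬ 0 < δ k * x k), |δ k|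
      - ∑ k ∈ univ.filter (fun k => 0 < δ k * x k), |δ k|) := by
  simp only [Pi.sub_apply, Pi.smul_apply, smul_eq_mul,
    abs_sub_mul_eq_of_mul_abs_le ht (hsmall _), sum_add_distrib, ← mul_sum, sum_ite,
    sum_neg_distrib]
  ring

end

open Classical in
/-- specialization of Theorem 1 to T = ∅ (basis pursuit). -/
theorem stmt_13 {m n : ℕ} (A : Matrix (Fin m) (Fin n) ℝ) (xstar : Fin n → ℝ)
    (hmin : ∀ x : Fin n → ℝ, A.mulVec x = A.mulVec xstar → x ≠ xstar →
      ∑ k, |xstar k| < ∑ k, |x k|)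
    (δ : Fin n → ℝ) (hδ : A.mulVec δ = 0) (hδne : δ ≠ 0) :
    ∑ k ∈ Finset.univ.filter (fun k => xstar k = 0), |δ k|
      + ∑ k ∈ Finset.univ.filter (fun k => xstar k ≠ 0 ∧ δ k * xstar k ≤ 0), |δ k|
      > ∑ k ∈ Finset.univ.filter (fun k => xstar k ≠ 0 ∧ δ k * xstar k > 0), |δ k| := by
  obtain ⟨t, ht, hsmall⟩ := exists_pos_mul_abs_le xstar δ
  have hfeas : A.mulVec (xstar - t • δ) = A.mulVec xstar := by
    rw [Matrix.mulVec_sub, Matrix.mulVec_smul, hδ, smul_zero, sub_zero]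
  have hne : xstar - t • δ ≠ xstar := by
    simpa [sub_eq_self, ht.ne'] using hδne
  have hgain := hmin _ hfeas hne
  rw [sum_abs_sub_smul_eq xstar δ ht.le hsmall, lt_add_iff_pos_right,
    mul_pos_iff_of_pos_left ht, sub_pos] at hgain
  have hpos : univ.filter (fun k => xstar k ≠ 0 ∧ δ k * xstar k > 0)
      = univ.filter (fun k => 0 < δ k * xstar k) :=
    filter_congr fun k _ => and_iff_right_of_imp fun h hx => by simp [hx] at h
  have hnonpos : ∑ k ∈ univ.filter (fun k => xstar k = 0), |δ k|
      + ∑ k ∈ univ.filter (fun k => xstar k ≠ 0 ∧ δ k * xstar k ≤ 0), |δ k|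
      = ∑ k ∈ univ.filter (fun k => ¬ 0 < δ k * xstar k), |δ k| := by
    simp only [sum_filter, ← sum_add_distrib]
    refine sum_congr rfl fun k _ => ?_
    by_cases hx : xstar k = 0 <;> simp [hx]
  rwa [gt_iff_lt, hpos, hnonpos]
end
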